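/- arXiv:0812.1363 — 2 statements merged into one kernel-verified Lean document; each statement's English description precedes it below -/
import Mathlib

section
/- Suppose p : [0,m] → ℝ is continuously differentiable, nonnegative, not identically zero, satisfies p(0) = 0 and γ(s)p'(s) + (γ'(s)+μ(s))p(s) = β1(s)·∫_0^m β2(y)p(y) dy for all s ∈ [0,m]. Then ∫_0^m β2(y)p(y) dy > 0 and R = 1. -/
/-!
Multiplying the equilibrium equation by the integrating factor `exp (∫_0^s μ/γ)` and using
`p 0 = 0` gives the variation-of-constants formula
`γ(s) p(s) = c ∫_0^s β1(y) exp (-∫_y^s μ/γ) dy` with `c = ∫_0^m β2 p`. Since `p ≥ 0` does not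
vanish identically, this forces `c > 0`; the inner integral of `R` is then `β2(s) p(s) / c`,
and integrating in `s` gives `c / c = 1`.
-/

open Set MeasureTheory intervalIntegral Filter

theorem ContinuousOn.hasDerivWithinAt_integral_Icc {E : Type*} [NormedAddCommGroup E]
    [NormedSpace ℝ E] [CompleteSpace E] {f : ℝ → E} {a b t : ℝ}
    (hf : ContinuousOn f (Icc a b)) (ht : t ∈ Icc a b) :
    HasDerivWithinAt (fun s => ∫ x in a..s, f x) (f t) (Icc a b) t := by
  have : Fact (t ∈ Icc a b) := ⟨ht⟩ -- for the `FTCFilter` instance on `𝓝[Icc a b] t`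
  refine integral_hasDerivWithinAt_right ?_
    (hf.stronglyMeasurableAtFilter_nhdsWithin measurableSet_Icc t) (hf t ht)
  exact (hf.mono (uIcc_subset_Icc (left_mem_Icc.2 (ht.1.trans ht.2)) ht)).intervalIntegrable

theorem eq_integral_of_hasDerivWithinAt_add_mul_eq {u u' q f : ℝ → ℝ} {a b : ℝ} (hab : a ≤ b)
    (hq : ContinuousOn q (Icc a b)) (hf : ContinuousOn f (Icc a b))
    (hu : ∀ s ∈ Icc a b, HasDerivWithinAt u (u' s) (Icc a b) s)
    (hode : ∀ s ∈ Icc a b, u' s + q s * u s = f s) :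
    u b = Real.exp (-∫ z in a..b, q z) * u a
      + ∫ y in a..b, Real.exp (-∫ z in y..b, q z) * f y := by
  set Q : ℝ → ℝ := fun s => ∫ z in a..s, q z with hQ
  have hQd (s) (hs : s ∈ Icc a b) : HasDerivWithinAt Q (q s) (Icc a b) s :=
    hq.hasDerivWithinAt_integral_Icc hs
  have hQc : ContinuousOn Q (Icc a b) := fun s hs => (hQd s hs).continuousWithinAt
  have hvd (s) (hs : s ∈ Icc a b) :
      HasDerivWithinAt (fun s => Real.exp (Q s) * u s) (Real.exp (Q s) * f s) (Icc a b) s :=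
    ((hQd s hs).exp.mul (hu s hs)).congr_deriv (by rw [← hode s hs]; ring)
  have hftc : ∫ y in a..b, Real.exp (Q y) * f y = Real.exp (Q b) * u b - u a := by
    rw [integral_eq_sub_of_hasDeriv_right_of_le hab (fun s hs => (hvd s hs).continuousWithinAt)
      (fun s hs => ((hvd s (Ioo_subset_Icc_self hs)).hasDerivAt
        (Icc_mem_nhds hs.1 hs.2)).hasDerivWithinAt)
      ((hQc.rexp.mul hf).intervalIntegrable_of_Icc hab)]
    simp [hQ]
  have hQ_sub (y) (hy : y ∈ uIcc a b) : Q y - Q b = -∫ z in y..b, q z := by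
    rw [uIcc_of_le hab] at hy
    rw [← neg_sub, integral_interval_sub_left (hq.intervalIntegrable_of_Icc hab)
      (hq.mono (uIcc_subset_Icc (left_mem_Icc.2 hab) hy)).intervalIntegrable]
  calc u b = Real.exp (-Q b) * (Real.exp (Q b) * u b) := by
        rw [← mul_assoc, ← Real.exp_add, neg_add_cancel, Real.exp_zero, one_mul]
    _ = Real.exp (-Q b) * u a + ∫ y in a..b, Real.exp (-Q b) * (Real.exp (Q y) * f y) := by
        rw [intervalIntegral.integral_const_mul, hftc]; ring
    _ = _ := by
        congr 1
        refine integral_congr fun y hy => ?_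
        rw [← hQ_sub y hy, sub_eq_neg_add, Real.exp_add]; ring

theorem mul_eq_integral_of_equilibrium {a b c : ℝ} {γ γ' μ β p p' : ℝ → ℝ}
    (hγd : ∀ s ∈ Icc a b, HasDerivWithinAt γ (γ' s) (Icc a b) s)
    (hγpos : ∀ s ∈ Icc a b, 0 < γ s) (hμc : ContinuousOn μ (Icc a b))
    (hβc : ContinuousOn β (Icc a b))
    (hpd : ∀ s ∈ Icc a b, HasDerivWithinAt p (p' s) (Icc a b) s) (hpa : p a = 0)
    (hode : ∀ s ∈ Icc a b, γ s * p' s + (γ' s + μ s) * p s = β s * c) :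
    ∀ s ∈ Icc a b, γ s * p s = c * ∫ y in a..s, β y * Real.exp (-∫ z in y..s, μ z / γ z) := by
  intro s hs
  have hsub : Icc a s ⊆ Icc a b := Icc_subset_Icc_right hs.2
  have hγc : ContinuousOn γ (Icc a b) := fun t ht => (hγd t ht).continuousWithinAt
  have hq : ContinuousOn (fun t => μ t / γ t) (Icc a b) :=
    hμc.div hγc fun t ht => (hγpos t ht).ne'
  rw [eq_integral_of_hasDerivWithinAt_add_mul_eq (u := fun t => γ t * p t)
    (f := fun t => β t * c) hs.1 (hq.mono hsub)
    ((hβc.mul continuousOn_const).mono hsub)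
    (fun t ht => ((hγd t (hsub ht)).mul (hpd t (hsub ht))).mono hsub)
    (fun t ht => ?_), hpa, mul_zero, mul_zero, zero_add, ← intervalIntegral.integral_const_mul]
  · exact integral_congr fun y _ => by ring
  · rw [← hode t (hsub ht)]
    field_simp [(hγpos t (hsub ht)).ne']
    ring

theorem equilibrium_implies_R_eq_one_general (m : ℝ) (hm : 0 < m)
    (γ γ' μ β1 β2 : ℝ → ℝ)
    (hγd : ∀ s ∈ Icc (0:ℝ) m, HasDerivWithinAt γ (γ' s) (Icc 0 m) s)
    (hγpos : ∀ s ∈ Icc (0:ℝ) m, 0 < γ s)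
    (hμc : ContinuousOn μ (Icc 0 m))
    (hβ1c : ContinuousOn β1 (Icc 0 m))
    (hβ2nn : ∀ s ∈ Icc (0:ℝ) m, 0 ≤ β2 s)
    (p p' : ℝ → ℝ)
    (hpd : ∀ s ∈ Icc (0:ℝ) m, HasDerivWithinAt p (p' s) (Icc 0 m) s)
    (hpnn : ∀ s ∈ Icc (0:ℝ) m, 0 ≤ p s)
    (hpne : ∃ s ∈ Icc (0:ℝ) m, p s ≠ 0)
    (hp0 : p 0 = 0)
    (hode : ∀ s ∈ Icc (0:ℝ) m,
      γ s * p' s + (γ' s + μ s) * p s = β1 s * ∫ y in (0:ℝ)..m, β2 y * p y) :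
    (0 < ∫ y in (0:ℝ)..m, β2 y * p y) ∧
    (∫ s in (0:ℝ)..m, ∫ y in (0:ℝ)..s,
      (β1 y * β2 s / γ s) * Real.exp (-∫ z in y..s, μ z / γ z)) = 1 := by
  set c := ∫ y in (0:ℝ)..m, β2 y * p y
  have hsol := mul_eq_integral_of_equilibrium hγd hγpos hμc hβ1c hpd hp0 hode
  have hc : 0 < c := by
    refine (integral_nonneg hm.le fun y hy => mul_nonneg (hβ2nn y hy) (hpnn y hy)).lt_of_ne' ?_
    intro (hc0 : c = 0)
    obtain ⟨s, hs, hps⟩ := hpne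
    have := hsol s hs
    rw [hc0, zero_mul, mul_eq_zero] at this
    exact this.elim (hγpos s hs).ne' hps
  refine ⟨hc, ?_⟩
  have hinner : ∀ s ∈ uIcc 0 m, (∫ y in (0:ℝ)..s,
      (β1 y * β2 s / γ s) * Real.exp (-∫ z in y..s, μ z / γ z)) = β2 s * p s / c := by
    intro s hs
    rw [uIcc_of_le hm.le] at hs
    have hγs := (hγpos s hs).ne'
    calc _ = β2 s / γ s * ∫ y in (0:ℝ)..s, β1 y * Real.exp (-∫ z in y..s, μ z / γ z) := by
          rw [← intervalIntegral.integral_const_mul]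
          exact integral_congr fun y _ => by ring
      _ = β2 s * p s / c := by
          rw [eq_div_iff hc.ne', div_mul_eq_mul_div, div_mul_eq_mul_div, div_eq_iff hγs]
          linear_combination -(β2 s) * hsol s hs
  rw [integral_congr hinner, intervalIntegral.integral_div, div_self hc.ne']

/-- Necessity of the condition `R = 1`: if `p` is a nontrivial nonnegative
continuously differentiable solution of the equilibrium equation with `p(0) = 0`,
then `∫_0^m β2 p > 0` and the frozen net reproduction number equals `1`. -/
theorem equilibrium_implies_R_eq_one (m : ℝ) (hm : 0 < m)
    (γ γ' μ β1 β2 : ℝ → ℝ)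
    (hγd : ∀ s ∈ Icc (0:ℝ) m, HasDerivWithinAt γ (γ' s) (Icc 0 m) s)
    (hγ'c : ContinuousOn γ' (Icc 0 m))
    (hγpos : ∀ s ∈ Icc (0:ℝ) m, 0 < γ s)
    (hμc : ContinuousOn μ (Icc 0 m)) (hμnn : ∀ s ∈ Icc (0:ℝ) m, 0 ≤ μ s)
    (hβ1c : ContinuousOn β1 (Icc 0 m)) (hβ1nn : ∀ s ∈ Icc (0:ℝ) m, 0 ≤ β1 s)
    (hβ2c : ContinuousOn β2 (Icc 0 m)) (hβ2nn : ∀ s ∈ Icc (0:ℝ) m, 0 ≤ β2 s)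
    (p p' : ℝ → ℝ)
    (hp'c : ContinuousOn p' (Icc 0 m))
    (hpd : ∀ s ∈ Icc (0:ℝ) m, HasDerivWithinAt p (p' s) (Icc 0 m) s)
    (hpnn : ∀ s ∈ Icc (0:ℝ) m, 0 ≤ p s)
    (hpne : ∃ s ∈ Icc (0:ℝ) m, p s ≠ 0)
    (hp0 : p 0 = 0)
    (hode : ∀ s ∈ Icc (0:ℝ) m,
      γ s * p' s + (γ' s + μ s) * p s = β1 s * ∫ y in (0:ℝ)..m, β2 y * p y) :
    (0 < ∫ y in (0:ℝ)..m, β2 y * p y) ∧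
    (∫ s in (0:ℝ)..m, ∫ y in (0:ℝ)..s,
      (β1 y * β2 s / γ s) * Real.exp (-∫ z in y..s, μ z / γ z)) = 1 :=
  equilibrium_implies_R_eq_one_general m hm γ γ' μ β1 β2 hγd hγpos hμc hβ1c hβ2nn p p' hpd hpnn hpne
    hp0 hode
end

section
/- Let h : [0,m] → ℝ be continuous with h ≥ 0 and h(y0) > 0 for some y0 ∈ [0,m). Define H(λ) = ∫_0^m ∫_0^s exp(−∫_y^s (λ+γ'(r)+μ(r))/γ(r) dr) · (h(y)/γ(y)) dy ds for λ ∈ ℝ. Then H is strictly decreasing, H(λ) → 0 as λ → +∞, H(λ) → +∞ as λ → −∞, the equation H(λ) = 1 has a unique real solution λ0, and λ0 < 0 if and only if H(0) < 1. -/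
open Set MeasureTheory intervalIntegral Filter Topology

/-!
With `P` and `Q` primitives of `1 / γ` and `(γ' + μ) / γ`, the exponent is
`λ (P s - P y) + (Q s - Q y)`, so `H(λ) = ∫∫_{0 ≤ y ≤ s ≤ m} e^{-λ (P s - P y)} K(s, y)` with
`K(s, y) = e^{-(Q s - Q y)} h(y) / γ(y) ≥ 0` continuous and `P` strictly increasing. The integrand
is then antitone in `λ`, strictly at `(m, y0)`; it is dominated by `K` for `λ ≥ 0` and tends to
`0` off the diagonal, so `H(λ) → 0` by dominated convergence; and `e^x ≥ x` gives
`H(λ) ≥ -λ ∫∫ (P s - P y) K`, a positive multiple of `-λ`. The intermediate value theorem and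
strict monotonicity give the unique root and its sign.
-/

lemma ContinuousOn.exists_continuous_eqOn_Icc {α β : Type*} [LinearOrder α] [TopologicalSpace α]
    [OrderTopology α] [TopologicalSpace β] {f : α → β} {a b : α} (hab : a ≤ b)
    (hf : ContinuousOn f (Icc a b)) : ∃ g : α → β, Continuous g ∧ EqOn g f (Icc a b) :=
  ⟨IccExtend hab ((Icc a b).domRestrict f),
    (continuousOn_iff_continuous_domRestrict.mp hf).Icc_extend',
    fun _ hx => IccExtend_of_mem hab _ hx⟩

lemma StrictAnti.exists_unique_eq_of_tendsto {H : ℝ → ℝ} (hanti : StrictAnti H)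
    (hH : Continuous H) {a c : ℝ} (htop : Tendsto H atTop (𝓝 a)) (hbot : Tendsto H atBot atTop)
    (hac : a < c) : ∃ x₀, H x₀ = c ∧ (∀ x, H x = c → x = x₀) ∧ ∀ x, x₀ < x ↔ H x < c := by
  obtain ⟨x₀, rfl⟩ : c ∈ range H := mem_range_of_exists_le_of_exists_ge hH
    ((htop.eventually (gt_mem_nhds hac)).exists.imp fun _ => le_of_lt)
    (hbot.eventually_ge_atTop c).exists
  exact ⟨x₀, rfl, fun _ hx => hanti.injective hx, fun _ => hanti.lt_iff_gt.symm⟩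

lemma tendsto_intervalIntegral_zero_of_dominated {ι : Type*} {l : Filter ι}
    [l.IsCountablyGenerated] {a b : ℝ} (hab : a ≤ b) {f : ι → ℝ → ℝ} {g : ℝ → ℝ}
    (hf : ∀ i, Continuous (f i)) (hg : Continuous g)
    (hfg : ∀ᶠ i in l, ∀ x ∈ Icc a b, |f i x| ≤ g x)
    (hlim : ∀ x ∈ Ico a b, Tendsto (fun i => f i x) l (𝓝 0)) :
    Tendsto (fun i => ∫ x in a..b, f i x) l (𝓝 0) := by
  simpa only [intervalIntegral.integral_zero] using
    tendsto_integral_filter_of_dominated_convergence (f := fun _ => 0) g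
    (.of_forall fun i => (hf i).aestronglyMeasurable)
    (hfg.mono fun i hi => ae_of_all _ fun x hx => hi x (by
      rw [uIoc_of_le hab] at hx; exact Ioc_subset_Icc_self hx))
    (hg.intervalIntegrable a b)
    (by
      filter_upwards [volume.ae_ne b] with x hxb hx
      rw [uIoc_of_le hab] at hx
      exact hlim x ⟨hx.1.le, hx.2.lt_of_ne hxb⟩)

noncomputable def triangleIntegral (m : ℝ) (F : ℝ → ℝ → ℝ) : ℝ :=
  ∫ s in (0:ℝ)..m, ∫ y in (0:ℝ)..s, F s y

section triangleIntegral

variable {m : ℝ} {F G : ℝ → ℝ → ℝ}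

lemma continuous_triangleIntegral {Φ : ℝ → ℝ → ℝ → ℝ}
    (hΦ : Continuous fun p : ℝ × ℝ × ℝ => Φ p.1 p.2.1 p.2.2) :
    Continuous fun t => triangleIntegral m (Φ t) := by
  have hinner : Continuous fun p : ℝ × ℝ => ∫ y in (0:ℝ)..p.2, Φ p.1 p.2 y :=
    continuous_parametric_intervalIntegral_of_continuous (f := fun (p : ℝ × ℝ) y => Φ p.1 p.2 y)
      (hΦ.comp (Homeomorph.prodAssoc ℝ ℝ ℝ).continuous) continuous_snd
  exact continuous_parametric_intervalIntegral_of_continuous' hinner 0 m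

lemma triangleIntegral_mono (hm : 0 ≤ m) (hF : Continuous (Function.uncurry F))
    (hG : Continuous (Function.uncurry G)) (hFG : ∀ s ∈ Icc 0 m, ∀ y ∈ Icc 0 s, F s y ≤ G s y) :
    triangleIntegral m F ≤ triangleIntegral m G :=
  integral_mono_on hm
    ((continuous_parametric_intervalIntegral_of_continuous hF continuous_id).intervalIntegrable _ _)
    ((continuous_parametric_intervalIntegral_of_continuous hG continuous_id).intervalIntegrable _ _)
    fun s hs => integral_mono_on hs.1 ((hF.uncurry_left s).intervalIntegrable _ _)
      ((hG.uncurry_left s).intervalIntegrable _ _) (hFG s hs)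

lemma triangleIntegral_lt_triangleIntegral (hm : 0 < m) (hF : Continuous (Function.uncurry F))
    (hG : Continuous (Function.uncurry G)) (hFG : ∀ s ∈ Icc 0 m, ∀ y ∈ Icc 0 s, F s y ≤ G s y)
    {y₀ : ℝ} (hy₀ : y₀ ∈ Icc 0 m) (hlt : F m y₀ < G m y₀) :
    triangleIntegral m F < triangleIntegral m G := by
  refine integral_lt_integral_of_continuousOn_of_le_of_exists_lt hm
    (continuous_parametric_intervalIntegral_of_continuous hF continuous_id).continuousOn
    (continuous_parametric_intervalIntegral_of_continuous hG continuous_id).continuousOn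
    (fun s hs => integral_mono_on hs.1.le ((hF.uncurry_left s).intervalIntegrable _ _)
      ((hG.uncurry_left s).intervalIntegrable _ _) (hFG s (Ioc_subset_Icc_self hs)))
    ⟨m, right_mem_Icc.2 hm.le, ?_⟩
  exact integral_lt_integral_of_continuousOn_of_le_of_exists_lt hm
    (hF.uncurry_left m).continuousOn (hG.uncurry_left m).continuousOn
    (fun y hy => hFG m (right_mem_Icc.2 hm.le) y (Ioc_subset_Icc_self hy)) ⟨y₀, hy₀, hlt⟩

end triangleIntegral

noncomputable def triangleLaplace (m : ℝ) (P : ℝ → ℝ) (K : ℝ → ℝ → ℝ) (lam : ℝ) : ℝ :=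
  triangleIntegral m fun s y => Real.exp (-(lam * (P s - P y))) * K s y

section triangleLaplace

variable {m : ℝ} {P : ℝ → ℝ} {K : ℝ → ℝ → ℝ}

lemma continuous_triangleLaplace (hP : Continuous P) (hK : Continuous (Function.uncurry K)) :
    Continuous (triangleLaplace m P K) :=
  continuous_triangleIntegral (by fun_prop)

lemma triangleLaplace_strictAnti (hP : Continuous P) (hPm : StrictMonoOn P (Icc 0 m))
    (hK : Continuous (Function.uncurry K)) (hK0 : ∀ s ∈ Icc 0 m, ∀ y ∈ Icc 0 s, 0 ≤ K s y)
    {y₀ : ℝ} (hy₀ : y₀ ∈ Ico 0 m) (hKy₀ : 0 < K m y₀) :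
    StrictAnti (triangleLaplace m P K) := by
  have hm : 0 < m := hy₀.1.trans_lt hy₀.2
  intro a b hab
  refine triangleIntegral_lt_triangleIntegral hm (by fun_prop) (by fun_prop) (fun s hs y hy => ?_)
    (Ico_subset_Icc_self hy₀) ?_
  · have hPys : P y ≤ P s := hPm.monotoneOn ⟨hy.1, hy.2.trans hs.2⟩ hs hy.2
    exact mul_le_mul_of_nonneg_right (Real.exp_le_exp.2 (by nlinarith)) (hK0 s hs y hy)
  · have hPy₀ : P y₀ < P m := hPm (Ico_subset_Icc_self hy₀) (right_mem_Icc.2 hm.le) hy₀.2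
    exact mul_lt_mul_of_pos_right (Real.exp_lt_exp.2 (by nlinarith)) hKy₀

lemma tendsto_triangleLaplace_atTop (hm : 0 ≤ m) (hP : Continuous P)
    (hPm : StrictMonoOn P (Icc 0 m)) (hK : Continuous (Function.uncurry K))
    (hK0 : ∀ s ∈ Icc 0 m, ∀ y ∈ Icc 0 s, 0 ≤ K s y) :
    Tendsto (triangleLaplace m P K) atTop (𝓝 0) := by
  have hbound : ∀ lam ≥ (0:ℝ), ∀ s ∈ Icc 0 m, ∀ y ∈ Icc 0 s,
      |Real.exp (-(lam * (P s - P y))) * K s y| ≤ K s y := fun lam hlam s hs y hy => by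
    have hPys : P y ≤ P s := hPm.monotoneOn ⟨hy.1, hy.2.trans hs.2⟩ hs hy.2
    rw [abs_of_nonneg (mul_nonneg (Real.exp_pos _).le (hK0 s hs y hy))]
    exact mul_le_of_le_one_left (hK0 s hs y hy) (Real.exp_le_one_iff.2 (by nlinarith))
  refine tendsto_intervalIntegral_zero_of_dominated hm (g := fun s => ∫ y in (0:ℝ)..s, K s y)
    (fun lam => continuous_parametric_intervalIntegral_of_continuous (μ := volume) (by fun_prop)
      continuous_id)
    (continuous_parametric_intervalIntegral_of_continuous (μ := volume) hK continuous_id) ?_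
    fun s hs => ?_
  · filter_upwards [eventually_ge_atTop 0] with lam hlam s hs
    exact (abs_integral_le_integral_abs hs.1).trans <| integral_mono_on hs.1
      (Continuous.intervalIntegrable (by fun_prop) _ _) ((hK.uncurry_left s).intervalIntegrable _ _)
      (hbound lam hlam s hs)
  refine tendsto_intervalIntegral_zero_of_dominated hs.1 (fun lam => by fun_prop)
    (hK.uncurry_left s) ((eventually_ge_atTop 0).mono fun lam hlam =>
      hbound lam hlam s (Ico_subset_Icc_self hs)) fun y hy => ?_
  have hPys : P y < P s :=
    hPm ⟨hy.1, hy.2.le.trans hs.2.le⟩ (Ico_subset_Icc_self hs) hy.2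
  simpa using (Real.tendsto_exp_atBot.comp (tendsto_neg_atTop_atBot.comp
    (tendsto_id.atTop_mul_const (sub_pos.2 hPys)))).mul_const (K s y)

lemma tendsto_triangleLaplace_atBot (hP : Continuous P) (hPm : StrictMonoOn P (Icc 0 m))
    (hK : Continuous (Function.uncurry K)) (hK0 : ∀ s ∈ Icc 0 m, ∀ y ∈ Icc 0 s, 0 ≤ K s y)
    {y₀ : ℝ} (hy₀ : y₀ ∈ Ico 0 m) (hKy₀ : 0 < K m y₀) :
    Tendsto (triangleLaplace m P K) atBot atTop := by
  have hm : 0 < m := hy₀.1.trans_lt hy₀.2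
  set C := triangleIntegral m fun s y => (P s - P y) * K s y
  have hC : 0 < C := by
    have hPy₀ : P y₀ < P m := hPm (Ico_subset_Icc_self hy₀) (right_mem_Icc.2 hm.le) hy₀.2
    simpa [C, triangleIntegral] using triangleIntegral_lt_triangleIntegral hm
      (F := fun _ _ => 0) continuous_const (by fun_prop) (fun s hs y hy => mul_nonneg
        (sub_nonneg.2 (hPm.monotoneOn ⟨hy.1, hy.2.trans hs.2⟩ hs hy.2)) (hK0 s hs y hy))
      (Ico_subset_Icc_self hy₀) (mul_pos (sub_pos.2 hPy₀) hKy₀)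
  have hlower : ∀ lam ≤ (0:ℝ), -lam * C ≤ triangleLaplace m P K lam := fun lam hlam =>
    calc -lam * C = triangleIntegral m fun s y => -lam * ((P s - P y) * K s y) := by
          simp only [C, triangleIntegral, intervalIntegral.integral_const_mul]
      _ ≤ triangleLaplace m P K lam :=
          triangleIntegral_mono hm.le (by fun_prop) (by fun_prop) fun s hs y hy => by
            rw [← mul_assoc]
            exact mul_le_mul_of_nonneg_right
              (by linarith [Real.add_one_le_exp (-(lam * (P s - P y)))]) (hK0 s hs y hy)
  exact tendsto_atTop_mono' _ ((eventually_le_atBot 0).mono hlower)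
    (tendsto_neg_atBot_atTop.atTop_mul_const hC)

end triangleLaplace

lemma strictMonoOn_primitive_of_pos {g : ℝ → ℝ} {a b c : ℝ} (hg : Continuous g)
    (hpos : ∀ x ∈ Icc a b, 0 < g x) : StrictMonoOn (fun t => ∫ r in c..t, g r) (Icc a b) :=
  fun x hx y hy hxy => by
    rw [← sub_pos, integral_interval_sub_left (hg.intervalIntegrable _ _)
      (hg.intervalIntegrable _ _)]
    exact intervalIntegral_pos_of_pos_on (hg.intervalIntegrable _ _)
      (fun r hr => hpos r ⟨hx.1.trans hr.1.le, hr.2.le.trans hy.2⟩) hxy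

lemma integral_add_add_div_eq_of_eqOn {γ γ' μ g q : ℝ → ℝ} {y s : ℝ} (lam : ℝ) (hg : Continuous g)
    (hq : Continuous q) (hgγ : EqOn g (fun r => 1 / γ r) (uIcc y s))
    (hqγ : EqOn q (fun r => (γ' r + μ r) / γ r) (uIcc y s)) :
    ∫ r in y..s, (lam + γ' r + μ r) / γ r = lam * (∫ r in y..s, g r) + ∫ r in y..s, q r := by
  rw [← intervalIntegral.integral_const_mul, ← intervalIntegral.integral_add
    ((hg.const_mul lam).intervalIntegrable _ _) (hq.intervalIntegrable _ _)]
  refine integral_congr fun r hr => ?_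
  simp only [hgγ hr, hqγ hr]
  ring

lemma integral_exp_neg_integral_eq_triangleLaplace {m lam : ℝ} {γ γ' μ h g q c : ℝ → ℝ}
    (hm : 0 ≤ m) (hg : Continuous g) (hq : Continuous q)
    (hgγ : EqOn g (fun r => 1 / γ r) (Icc 0 m))
    (hqγ : EqOn q (fun r => (γ' r + μ r) / γ r) (Icc 0 m))
    (hcγ : EqOn c (fun r => h r / γ r) (Icc 0 m)) :
    ∫ s in (0:ℝ)..m, ∫ y in (0:ℝ)..s,
        Real.exp (-∫ r in y..s, (lam + γ' r + μ r) / γ r) * (h y / γ y) =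
      triangleLaplace m (fun t => ∫ r in (0:ℝ)..t, g r)
        (fun s y => Real.exp (-((∫ r in (0:ℝ)..s, q r) - ∫ r in (0:ℝ)..y, q r)) * c y) lam := by
  refine integral_congr fun s hs => integral_congr fun y hy => ?_
  rw [uIcc_of_le hm] at hs
  rw [uIcc_of_le hs.1] at hy
  have hy' : y ∈ Icc 0 m := ⟨hy.1, hy.2.trans hs.2⟩
  have hys := uIcc_subset_Icc hy' hs
  simp only [integral_interval_sub_left (hg.intervalIntegrable _ _) (hg.intervalIntegrable _ _),
    integral_interval_sub_left (hq.intervalIntegrable _ _) (hq.intervalIntegrable _ _),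
    integral_add_add_div_eq_of_eqOn lam hg hq (hgγ.mono hys) (hqγ.mono hys), hcγ hy']
  rw [neg_add, Real.exp_add, mul_assoc]

theorem reduced_characteristic_equation_general (m : ℝ) (hm : 0 < m)
    (γ γ' μ h : ℝ → ℝ)
    (hγd : ∀ s ∈ Icc (0:ℝ) m, HasDerivWithinAt γ (γ' s) (Icc 0 m) s)
    (hγ'c : ContinuousOn γ' (Icc 0 m))
    (hγpos : ∀ s ∈ Icc (0:ℝ) m, 0 < γ s)
    (hμc : ContinuousOn μ (Icc 0 m))
    (hhc : ContinuousOn h (Icc 0 m)) (hhnn : ∀ s ∈ Icc (0:ℝ) m, 0 ≤ h s)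
    (hhpos : ∃ y0 ∈ Ico (0:ℝ) m, 0 < h y0)
    (H : ℝ → ℝ)
    (hH : ∀ lam, H lam = ∫ s in (0:ℝ)..m, ∫ y in (0:ℝ)..s,
      Real.exp (-∫ r in y..s, (lam + γ' r + μ r) / γ r) * (h y / γ y)) :
    StrictAnti H ∧
    Tendsto H atTop (nhds 0) ∧
    Tendsto H atBot atTop ∧
    ∃ lam0 : ℝ, H lam0 = 1 ∧ (∀ lam, H lam = 1 → lam = lam0) ∧
      (lam0 < 0 ↔ H 0 < 1) := by
  obtain ⟨y₀, hy₀, hhy₀⟩ := hhpos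
  have hγc : ContinuousOn γ (Icc 0 m) := fun s hs => (hγd s hs).continuousWithinAt
  have hγ0 : ∀ s ∈ Icc (0:ℝ) m, γ s ≠ 0 := fun s hs => (hγpos s hs).ne'
  obtain ⟨g, hg, hgγ⟩ := (continuousOn_const.div hγc hγ0).exists_continuous_eqOn_Icc hm.le
  obtain ⟨q, hq, hqγ⟩ := ((hγ'c.add hμc).div hγc hγ0).exists_continuous_eqOn_Icc hm.le
  obtain ⟨c, hc, hcγ⟩ := (hhc.div hγc hγ0).exists_continuous_eqOn_Icc hm.le
  set P := fun t => ∫ r in (0:ℝ)..t, g r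
  set Q := fun t => ∫ r in (0:ℝ)..t, q r
  set K := fun s y => Real.exp (-(Q s - Q y)) * c y
  obtain rfl : H = triangleLaplace m P K := funext fun lam =>
    (hH lam).trans (integral_exp_neg_integral_eq_triangleLaplace hm.le hg hq hgγ hqγ hcγ)
  have hP : Continuous P := continuous_primitive (fun _ _ => hg.intervalIntegrable _ _) 0
  have hQ : Continuous Q := continuous_primitive (fun _ _ => hq.intervalIntegrable _ _) 0
  have hPm : StrictMonoOn P (Icc 0 m) := strictMonoOn_primitive_of_pos hg fun x hx => by
    rw [hgγ hx]; exact one_div_pos.2 (hγpos x hx)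
  have hK : Continuous (Function.uncurry K) := by fun_prop
  have hc0 : ∀ y ∈ Icc 0 m, 0 ≤ c y := fun y hy => by
    rw [hcγ hy]; exact div_nonneg (hhnn y hy) (hγpos y hy).le
  have hK0 : ∀ s ∈ Icc 0 m, ∀ y ∈ Icc 0 s, 0 ≤ K s y := fun s hs y hy =>
    mul_nonneg (Real.exp_pos _).le (hc0 y ⟨hy.1, hy.2.trans hs.2⟩)
  have hKy₀ : 0 < K m y₀ := mul_pos (Real.exp_pos _) (by
    rw [hcγ (Ico_subset_Icc_self hy₀)]; exact div_pos hhy₀ (hγpos y₀ (Ico_subset_Icc_self hy₀)))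
  have hanti := triangleLaplace_strictAnti hP hPm hK hK0 hy₀ hKy₀
  have htop := tendsto_triangleLaplace_atTop hm.le hP hPm hK hK0
  have hbot := tendsto_triangleLaplace_atBot hP hPm hK hK0 hy₀ hKy₀
  obtain ⟨lam₀, hroot, huniq, hsign⟩ :=
    hanti.exists_unique_eq_of_tendsto (continuous_triangleLaplace hP hK) htop hbot one_pos
  exact ⟨hanti, htop, hbot, lam₀, hroot, huniq, hsign 0⟩

/-- The reduced characteristic function `H` (arising when `β2` is constant) is
strictly decreasing, tends to `0` at `+∞` and to `+∞` at `−∞`, the equation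
`H(λ) = 1` has a unique real solution `λ0`, and `λ0 < 0` iff `H(0) < 1`. -/
theorem reduced_characteristic_equation (m : ℝ) (hm : 0 < m)
    (γ γ' μ h : ℝ → ℝ)
    (hγd : ∀ s ∈ Icc (0:ℝ) m, HasDerivWithinAt γ (γ' s) (Icc 0 m) s)
    (hγ'c : ContinuousOn γ' (Icc 0 m))
    (hγpos : ∀ s ∈ Icc (0:ℝ) m, 0 < γ s)
    (hμc : ContinuousOn μ (Icc 0 m)) (hμnn : ∀ s ∈ Icc (0:ℝ) m, 0 ≤ μ s)
    (hhc : ContinuousOn h (Icc 0 m)) (hhnn : ∀ s ∈ Icc (0:ℝ) m, 0 ≤ h s)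
    (hhpos : ∃ y0 ∈ Ico (0:ℝ) m, 0 < h y0)
    (H : ℝ → ℝ)
    (hH : ∀ lam, H lam = ∫ s in (0:ℝ)..m, ∫ y in (0:ℝ)..s,
      Real.exp (-∫ r in y..s, (lam + γ' r + μ r) / γ r) * (h y / γ y)) :
    StrictAnti H ∧
    Tendsto H atTop (nhds 0) ∧
    Tendsto H atBot atTop ∧
    ∃ lam0 : ℝ, H lam0 = 1 ∧ (∀ lam, H lam = 1 → lam = lam0) ∧
      (lam0 < 0 ↔ H 0 < 1) :=
  reduced_characteristic_equation_general m hm γ γ' μ h hγd hγ'c hγpos hμc hhc hhnn hhpos H hH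
end
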